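/- Let ε ∈ (0, 1] and let I be a bin packing instance partitioned into large items I_L and small items I_S, where every item of I_S has size less than ε/2. Suppose B is a packing of the large items I_L into K bins, for some K ≥ 1. Then there exists a packing B' of the whole instance I into at most max{K, (1+ε)·OPT(I) + 1} bins such that B'(i) = B(i) for every large item i ∈ I_L. -/
import Mathlib


open Finset

/-- `IsBPOpt s N` : `N` is the least number of bins (of capacity 1) into which the
items with sizes `s` can be packed. -/
def IsBPOpt {ι : Type} [Fintype ι] (s : ι → ℝ) (N : ℕ) : Prop :=
  (∃ B : ι → Fin N, ∀ j : Fin N, ∑ i ∈ Finset.univ.filter (fun i => B i = j), s i ≤ 1) ∧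
  ∀ N' : ℕ, (∃ B : ι → Fin N', ∀ j : Fin N',
      ∑ i ∈ Finset.univ.filter (fun i => B i = j), s i ≤ 1) → N ≤ N'

theorem firstFit_small_items
    (ε : ℝ) (hε0 : 0 < ε) (hε : ε ≤ 1)
    (ι : Type) [Fintype ι] (s : ι → ℝ)
    (hspos : ∀ i, 0 < s i) (hsle : ∀ i, s i ≤ 1)
    (large : ι → Prop) [DecidablePred large]
    (hsmall : ∀ i, ¬ large i → s i < ε / 2)
    (K : ℕ) (hK : 1 ≤ K)
    (B : {i : ι // large i} → Fin K)
    (hB : ∀ j : Fin K,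
      ∑ i ∈ Finset.univ.filter (fun i : {i : ι // large i} => B i = j), s i.1 ≤ 1)
    (OPT : ℕ) (hOPT : IsBPOpt s OPT) :
    ∃ N : ℕ, (N : ℝ) ≤ max (K : ℝ) ((1 + ε) * OPT + 1) ∧
      ∃ B' : ι → Fin N,
        (∀ j : Fin N, ∑ i ∈ Finset.univ.filter (fun i => B' i = j), s i ≤ 1) ∧
        ∀ (i : ι) (hi : large i), (B' i : ℕ) = (B ⟨i, hi⟩ : ℕ) := by
  classical
  obtain ⟨⟨B₀, hB₀⟩, -⟩ := hOPT
  have htotal : ∑ i, s i ≤ (OPT : ℝ) := by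
    have hfib : ∑ j : Fin OPT, ∑ i ∈ Finset.univ.filter (fun i => B₀ i = j), s i
        = ∑ i, s i := Finset.sum_fiberwise _ _ _
    calc ∑ i, s i = ∑ j : Fin OPT, ∑ i ∈ Finset.univ.filter (fun i => B₀ i = j), s i :=
          hfib.symm
      _ ≤ ∑ _j : Fin OPT, (1 : ℝ) := Finset.sum_le_sum (fun j _ => hB₀ j)
      _ = OPT := by simp
  have key : ∀ T : Finset ι, (∀ i ∈ T, ¬ large i) →
      ∃ M : ℕ, K ≤ M ∧ ∃ B' : ι → Fin M,
        (∀ i (hi : large i), ((B' i : ℕ) = (B ⟨i, hi⟩ : ℕ))) ∧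
        (∀ j : Fin M,
          ∑ i ∈ (Finset.univ.filter large ∪ T).filter (fun i => B' i = j), s i ≤ 1) ∧
        (M = K ∨ ∃ j0 : Fin M, ∀ j : Fin M, j ≠ j0 →
          1 - ε/2 < ∑ i ∈ (Finset.univ.filter large ∪ T).filter (fun i => B' i = j), s i) := by
    intro T
    induction T using Finset.induction_on with
    | empty =>
      intro _
      have hK0 : 0 < K := hK
      refine ⟨K, le_refl K, fun i => if h : large i then B ⟨i, h⟩ else ⟨0, hK0⟩, ?_, ?_,
        Or.inl rfl⟩
      · intro i hi; simp [dif_pos hi]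
      · intro j
        rw [Finset.union_empty, Finset.filter_filter]
        have hset : Finset.univ.filter
              (fun i => large i ∧ (if h : large i then B ⟨i, h⟩ else ⟨0, hK0⟩) = j)
            = (Finset.univ.filter (fun i : {x // large x} => B i = j)).map
                (Function.Embedding.subtype large) := by
          ext i
          simp only [Finset.mem_filter, Finset.mem_univ, true_and, Finset.mem_map,
            Function.Embedding.coe_subtype]
          constructor
          · rintro ⟨hl, hbj⟩
            exact ⟨⟨i, hl⟩, by rwa [dif_pos hl] at hbj, rfl⟩
          · rintro ⟨⟨i', hl⟩, hbj, rfl⟩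
            exact ⟨hl, by rwa [dif_pos hl]⟩
        rw [hset, Finset.sum_map]
        simpa using hB j
    | @insert a T ha IH =>
      intro hT
      have ha' : ¬ large a := hT a (Finset.mem_insert_self a T)
      obtain ⟨M, hKM, B', hcons, hload, hinv⟩ := IH (fun i hi => hT i (Finset.mem_insert_of_mem hi))
      set S : Finset ι := Finset.univ.filter large ∪ T with hSdef
      have hS' : Finset.univ.filter large ∪ insert a T = insert a S := by
        rw [hSdef, Finset.union_insert]
      have haS : a ∉ S := by
        simp [hSdef, Finset.mem_union, Finset.mem_filter, ha', ha]
      by_cases hfull : ∀ j : Fin M, 1 - ε/2 < ∑ i ∈ S.filter (fun i => B' i = j), s i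
      · -- open a new bin
        set B2 : ι → Fin (M + 1) :=
          fun i => if i = a then Fin.last M else (B' i).castSucc with hB2
        have hBa : B2 a = Fin.last M := if_pos rfl
        have hBne : ∀ i, i ≠ a → B2 i = (B' i).castSucc := fun i hia => if_neg hia
        have hfc : ∀ j' : Fin M, S.filter (fun i => B2 i = j'.castSucc)
            = S.filter (fun i => B' i = j') := by
          intro j'
          apply Finset.filter_congr
          intro i hi
          have hia : i ≠ a := fun h => haS (h ▸ hi)
          rw [hBne i hia]
          simp [Fin.castSucc_inj]
        refine ⟨M + 1, le_trans hKM (Nat.le_succ M), B2, ?_, ?_, Or.inr ⟨Fin.last M, ?_⟩⟩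
        · intro i hi
          have hia : i ≠ a := fun h => ha' (h ▸ hi)
          rw [hBne i hia, Fin.coe_castSucc]
          exact hcons i hi
        · intro j
          rw [hS', Finset.filter_insert]
          rcases Fin.eq_castSucc_or_eq_last j with ⟨j', rfl⟩ | rfl
          · rw [if_neg (show ¬ B2 a = j'.castSucc from by
              rw [hBa]; exact (Fin.castSucc_lt_last j').ne')]
            rw [hfc j']
            exact hload j'
          · rw [if_pos hBa]
            have hempty : S.filter (fun i => B2 i = Fin.last M) = ∅ := by
              rw [Finset.filter_eq_empty_iff]
              intro i hi
              have hia : i ≠ a := fun h => haS (h ▸ hi)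
              rw [hBne i hia]
              exact (Fin.castSucc_lt_last (B' i)).ne
            rw [Finset.sum_insert (by simp [hempty]), hempty]
            simpa using hsle a
        · intro j hj
          rw [hS', Finset.filter_insert]
          obtain ⟨j', rfl⟩ : ∃ j' : Fin M, j = Fin.castSucc j' := by
            rcases Fin.eq_castSucc_or_eq_last j with h | h
            · exact h
            · exact absurd h hj
          rw [if_neg (show ¬ B2 a = j'.castSucc from by
            rw [hBa]; exact (Fin.castSucc_lt_last j').ne')]
          rw [hfc j']
          exact hfull j'
      · -- put the item in a non-full bin
        push_neg at hfull
        obtain ⟨j0, hj0⟩ := hfull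
        refine ⟨M, hKM, Function.update B' a j0, ?_, ?_, ?_⟩
        · intro i hi
          have hia : i ≠ a := fun h => ha' (h ▸ hi)
          rw [Function.update_of_ne hia]
          exact hcons i hi
        · intro j
          rw [hS', Finset.filter_insert]
          have hfc : S.filter (fun i => Function.update B' a j0 i = j)
              = S.filter (fun i => B' i = j) := by
            apply Finset.filter_congr
            intro i hi
            have hia : i ≠ a := fun h => haS (h ▸ hi)
            rw [Function.update_of_ne hia]
          by_cases hj : j0 = j
          · rw [if_pos (by rw [Function.update_self]; exact hj)]
            rw [Finset.sum_insert (by simp [hfc, haS]), hfc]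
            have h1 : s a < ε / 2 := hsmall a ha'
            have h2 : ∑ i ∈ S.filter (fun i => B' i = j), s i ≤ 1 - ε/2 := hj ▸ hj0
            linarith
          · rw [if_neg (by rw [Function.update_self]; exact hj)]
            rw [hfc]
            exact hload j
        · rcases hinv with hMK | ⟨j1, hj1⟩
          · exact Or.inl hMK
          · have hj01 : j0 = j1 := by
              by_contra h
              exact absurd (hj1 j0 h) (not_lt.mpr hj0)
            refine Or.inr ⟨j1, ?_⟩
            intro j hj
            rw [hS', Finset.filter_insert]
            rw [if_neg (by rw [Function.update_self, hj01]; exact fun h => hj h.symm)]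
            have hfc : S.filter (fun i => Function.update B' a j0 i = j)
                = S.filter (fun i => B' i = j) := by
              apply Finset.filter_congr
              intro i hi
              have hia : i ≠ a := fun h => haS (h ▸ hi)
              rw [Function.update_of_ne hia]
            rw [hfc]
            exact hj1 j hj
  obtain ⟨M, hKM, B', hcons, hload, hinv⟩ :=
    key (Finset.univ.filter (fun i => ¬ large i)) (fun i hi => (Finset.mem_filter.mp hi).2)
  have hU : Finset.univ.filter large ∪ Finset.univ.filter (fun i => ¬ large i)
      = (Finset.univ : Finset ι) := Finset.filter_union_filter_not_eq _ _
  rw [hU] at hload hinv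
  refine ⟨M, ?_, B', hload, hcons⟩
  rcases hinv with rfl | ⟨j0, hj0⟩
  · exact le_max_left _ _
  · refine le_trans ?_ (le_max_right _ _)
    -- bound M via total size
    have hM1 : 1 ≤ M := le_trans hK hKM
    have hfib : ∑ j : Fin M, ∑ i ∈ Finset.univ.filter (fun i => B' i = j), s i
        = ∑ i, s i := Finset.sum_fiberwise _ _ _
    have hnn : ∀ j : Fin M, 0 ≤ ∑ i ∈ Finset.univ.filter (fun i => B' i = j), s i :=
      fun j => Finset.sum_nonneg (fun i _ => (hspos i).le)
    have h1 : ((Finset.univ.erase j0).card : ℝ) * (1 - ε/2)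
        ≤ ∑ j ∈ Finset.univ.erase j0, ∑ i ∈ Finset.univ.filter (fun i => B' i = j), s i := by
      have := Finset.card_nsmul_le_sum (Finset.univ.erase j0)
        (fun j => ∑ i ∈ Finset.univ.filter (fun i => B' i = j), s i) (1 - ε/2)
        (fun j hjm => (hj0 j (Finset.ne_of_mem_erase hjm)).le)
      simpa [nsmul_eq_mul] using this
    have hcard : ((Finset.univ.erase j0).card : ℝ) = (M : ℝ) - 1 := by
      rw [Finset.card_erase_of_mem (Finset.mem_univ _)]
      simp only [Finset.card_univ, Fintype.card_fin]
      rw [Nat.cast_sub hM1]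
      simp
    have h2 : ∑ j ∈ Finset.univ.erase j0, ∑ i ∈ Finset.univ.filter (fun i => B' i = j), s i
        ≤ ∑ j : Fin M, ∑ i ∈ Finset.univ.filter (fun i => B' i = j), s i :=
      Finset.sum_le_sum_of_subset_of_nonneg (Finset.erase_subset _ _)
        (fun j _ _ => hnn j)
    have hmain : ((M : ℝ) - 1) * (1 - ε/2) ≤ (OPT : ℝ) := by
      rw [← hcard]
      calc ((Finset.univ.erase j0).card : ℝ) * (1 - ε/2)
          ≤ ∑ j ∈ Finset.univ.erase j0, ∑ i ∈ Finset.univ.filter (fun i => B' i = j), s i := h1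
        _ ≤ ∑ j : Fin M, ∑ i ∈ Finset.univ.filter (fun i => B' i = j), s i := h2
        _ = ∑ i, s i := hfib
        _ ≤ (OPT : ℝ) := htotal
    have hMr : (1 : ℝ) ≤ (M : ℝ) := by exact_mod_cast hM1
    have hOPT0 : (0 : ℝ) ≤ (OPT : ℝ) := Nat.cast_nonneg _
    nlinarith [mul_nonneg (sub_nonneg.mpr hMr) (mul_nonneg hε0.le (sub_nonneg.mpr hε)),
      mul_le_mul_of_nonneg_left hmain (by linarith : (0:ℝ) ≤ 1 + ε)]
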